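/- Let d ≥ 1, let k = (k_1,…,k_d) be a multi-index, and let f : ℝ^d → ℝ possess a continuous mixed partial derivative ∂^{|k|}f/∂x_1^{k_1}⋯∂x_d^{k_d}. Then the mixed partial derivatives ∂^{|k|}B_n(f;x)/∂x_1^{k_1}⋯∂x_d^{k_d} of the simplex Bernstein polynomials converge to ∂^{|k|}f(x)/∂x_1^{k_1}⋯∂x_d^{k_d} as n → ∞, uniformly on the simplex S^d = {x ∈ ℝ^d : x_1,…,x_d ≥ 0 and x_1+⋯+x_d ≤ 1}. -/

import Mathlib

/-- The `n`-th "simplex" Bernstein polynomial of `f : ℝ^d → ℝ`. -/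
noncomputable def simplexBernstein (d n : ℕ) (f : (Fin d → ℝ) → ℝ) (x : Fin d → ℝ) : ℝ :=
  ∑ j ∈ (Fintype.piFinset (fun _ : Fin d => Finset.range (n + 1))).filter
      (fun j => ∑ i, j i ≤ n),
    f (fun i => (j i : ℝ) / n) *
      ((n.factorial : ℝ) / (((∏ i, (j i).factorial) * (n - ∑ i, j i).factorial : ℕ) : ℝ)) *
      (∏ i, x i ^ (j i)) * (1 - ∑ i, x i) ^ (n - ∑ i, j i)

/-- The standard simplex `S^d = {x : x_i ≥ 0, x_1+⋯+x_d ≤ 1}`. -/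
def stdSimplex' (d : ℕ) : Set (Fin d → ℝ) := {x | (∀ i, 0 ≤ x i) ∧ ∑ i, x i ≤ 1}

/-- Partial derivative of `g : ℝ^d → ℝ` in the `i`-th coordinate. -/
noncomputable def partialDeriv' {d : ℕ} (i : Fin d) (g : (Fin d → ℝ) → ℝ) :
    (Fin d → ℝ) → ℝ :=
  fun x => deriv (fun t => g (Function.update x i t)) (x i)

/-- Mixed partial derivative `∂^{|k|}/∂x_1^{k_1}⋯∂x_d^{k_d}` of `g : ℝ^d → ℝ`
(the derivative in `x_1` is applied outermost). -/
noncomputable def mixedPartial {d : ℕ} (k : Fin d → ℕ) (g : (Fin d → ℝ) → ℝ) :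
    (Fin d → ℝ) → ℝ :=
  (List.finRange d).foldr (fun i h => (partialDeriv' i)^[k i] h) g

/-- `IsPartialAlong l f g` says that `g` is the iterated partial derivative of `f` taken
successively in the coordinates listed in `l` (head of the list is the outermost
differentiation), each single differentiation existing everywhere. -/
def IsPartialAlong {d : ℕ} : List (Fin d) → ((Fin d → ℝ) → ℝ) → ((Fin d → ℝ) → ℝ) → Prop
  | [], f, g => g = f
  | i :: l, f, g => ∃ h : (Fin d → ℝ) → ℝ, IsPartialAlong l f h ∧
      ∀ x, HasDerivAt (fun t => h (Function.update x i t)) (g x) (x i)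

/-- The list of coordinates `1^{k_1}, 2^{k_2}, …, d^{k_d}` encoding the multi-index `k`. -/
def multiIndexList {d : ℕ} (k : Fin d → ℕ) : List (Fin d) :=
  (List.finRange d).flatMap fun i => List.replicate (k i) i

/-!
Differentiating a Bernstein sum of degree `m + 1` in `x_i` gives `m + 1` times the Bernstein sum
of degree `m` of the forward differences of its coefficients in the direction `e_i`. Iterating
along the `K = |k|` coordinates listed by `multiIndexList k`, the mixed partial of `B_n(f)` is
`n (n - 1) ⋯ (n - K + 1)` times the Bernstein sum of degree `n - K` of the `K`-fold finite
differences of `f` with step `1 / n` at the grid points `j / n`. By the mean value theorem each of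
these differences is `n ^ (-K) * g ξ_j` for a point `ξ_j` within `K / n` of `j / (n - K)`, and the
prefactor `n (n - 1) ⋯ (n - K + 1) / n ^ K` tends to `1`. What remains is Bernstein's proof of
the Weierstrass theorem applied to the node values `g ξ_j`: the weights are nonnegative, sum to
one and have variance `O(1 / m)` on the simplex, and `g` is uniformly continuous on the unit cube.
-/

open Finset Filter Topology fwdDiff

section

variable {d : ℕ}

/-! ### Bernstein sums on the simplex -/

def simplexIndices (d m : ℕ) : Finset (Fin d → ℕ) :=
  (Fintype.piFinset fun _ : Fin d => range (m + 1)).filter fun j => ∑ i, j i ≤ m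

noncomputable def multinomialCoeff (m : ℕ) (j : Fin d → ℕ) : ℝ :=
  (m.factorial : ℝ) / (((∏ i, (j i).factorial) * (m - ∑ i, j i).factorial : ℕ) : ℝ)

noncomputable def bernsteinWeight (m : ℕ) (j : Fin d → ℕ) (x : Fin d → ℝ) : ℝ :=
  multinomialCoeff m j * (∏ i, x i ^ j i) * (1 - ∑ i, x i) ^ (m - ∑ i, j i)

noncomputable def bernsteinSum (m : ℕ) (F : (Fin d → ℕ) → ℝ) (x : Fin d → ℝ) : ℝ :=
  ∑ j ∈ simplexIndices d m, F j * bernsteinWeight m j x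

noncomputable def gridPoint (n : ℕ) (j : Fin d → ℕ) : Fin d → ℝ := fun i => (j i : ℝ) / n

lemma mem_simplexIndices {m : ℕ} {j : Fin d → ℕ} : j ∈ simplexIndices d m ↔ ∑ i, j i ≤ m := by
  refine ⟨fun h => (mem_filter.1 h).2,
    fun h => mem_filter.2 ⟨Fintype.mem_piFinset.2 fun i => mem_range.2 ?_, h⟩⟩
  exact Nat.lt_succ_of_le ((single_le_sum (fun _ _ => Nat.zero_le _) (mem_univ i)).trans h)

lemma le_of_mem_simplexIndices {m : ℕ} {j : Fin d → ℕ} (h : j ∈ simplexIndices d m) (i : Fin d) :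
    j i ≤ m :=
  (single_le_sum (fun _ _ => Nat.zero_le _) (mem_univ i)).trans (mem_simplexIndices.1 h)

lemma bernsteinWeight_nonneg {m : ℕ} {j : Fin d → ℕ} {x : Fin d → ℝ}
    (hx : x ∈ stdSimplex' d) : 0 ≤ bernsteinWeight m j x :=
  mul_nonneg (mul_nonneg (div_nonneg (Nat.cast_nonneg _) (Nat.cast_nonneg _))
    (prod_nonneg fun i _ => pow_nonneg (hx.1 i) _)) (pow_nonneg (sub_nonneg.2 hx.2) _)

lemma simplexBernstein_eq_bernsteinSum (n : ℕ) (f : (Fin d → ℝ) → ℝ) :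
    simplexBernstein d n f = bernsteinSum n fun j => f (gridPoint n j) := by
  funext x
  exact sum_congr rfl fun j _ => by simp only [bernsteinWeight, multinomialCoeff, mul_assoc]; rfl

lemma sum_add_single_one (a : Fin d → ℕ) (i : Fin d) :
    ∑ r, (a + Pi.single i 1 : Fin d → ℕ) r = ∑ r, a r + 1 := by
  simp [sum_add_distrib]

lemma sub_single_one_add_single_one {a : Fin d → ℕ} {i : Fin d} (h : a i ≠ 0) :
    a - Pi.single i 1 + Pi.single i 1 = a := by
  refine tsub_add_cancel_of_le fun r => ?_
  rcases eq_or_ne r i with rfl | hr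
  · simpa using Nat.one_le_iff_ne_zero.2 h
  · simp [hr]

lemma prod_pow_sub_single_one (x : Fin d → ℝ) (j : Fin d → ℕ) (i : Fin d) :
    ∏ r, x r ^ (j - Pi.single i 1 : Fin d → ℕ) r =
      x i ^ (j i - 1) * ∏ r ∈ univ.erase i, x r ^ j r := by
  rw [← mul_prod_erase univ _ (mem_univ i)]
  congr 1
  · simp
  · exact prod_congr rfl fun r hr => by simp [(mem_erase.1 hr).1]

lemma mul_prod_pow_sub_single_one (x : Fin d → ℝ) {j : Fin d → ℕ} {i : Fin d} (h : j i ≠ 0) :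
    x i * ∏ r, x r ^ (j - Pi.single i 1 : Fin d → ℕ) r = ∏ r, x r ^ j r := by
  rw [prod_pow_sub_single_one, ← mul_assoc, ← pow_succ',
    Nat.sub_add_cancel (Nat.one_le_iff_ne_zero.2 h), mul_prod_erase univ (fun r => x r ^ j r) (mem_univ i)]

lemma add_single_one_mul_multinomialCoeff_succ (m : ℕ) (a : Fin d → ℕ) (i : Fin d) :
    ((a i : ℝ) + 1) * multinomialCoeff (m + 1) (a + Pi.single i 1) =
      (m + 1) * multinomialCoeff m a := by
  have hfac : ∏ r, ((a + Pi.single i 1 : Fin d → ℕ) r).factorial =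
      (a i + 1) * ∏ r, (a r).factorial := by
    rw [← mul_prod_erase univ _ (mem_univ i),
      ← mul_prod_erase univ (fun r => (a r).factorial) (mem_univ i),
      prod_congr rfl fun r hr =>
        show ((a + Pi.single i 1 : Fin d → ℕ) r).factorial = (a r).factorial by
          simp [(mem_erase.1 hr).1]]
    simp [Nat.factorial_succ, mul_assoc]
  have hslack : m + 1 - ∑ r, (a + Pi.single i 1 : Fin d → ℕ) r = m - ∑ r, a r := by
    rw [sum_add_single_one]; omega
  simp only [multinomialCoeff, hfac, hslack]
  have : ((∏ r, (a r).factorial : ℕ) : ℝ) ≠ 0 := by positivity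
  have : (((m - ∑ r, a r).factorial : ℕ) : ℝ) ≠ 0 := by positivity
  push_cast [Nat.factorial_succ]
  field_simp

lemma slack_mul_multinomialCoeff_succ {m : ℕ} {j : Fin d → ℕ} (h : ∑ r, j r ≤ m) :
    ((m + 1 - ∑ r, j r : ℕ) : ℝ) * multinomialCoeff (m + 1) j = (m + 1) * multinomialCoeff m j := by
  have hfac : (m + 1 - ∑ r, j r).factorial = (m + 1 - ∑ r, j r) * (m - ∑ r, j r).factorial := by
    rw [show m + 1 - ∑ r, j r = m - ∑ r, j r + 1 by omega, Nat.factorial_succ]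
  simp only [multinomialCoeff, hfac]
  have : ((∏ r, (j r).factorial : ℕ) : ℝ) ≠ 0 := by positivity
  have : (((m - ∑ r, j r).factorial : ℕ) : ℝ) ≠ 0 := by positivity
  have : ((m + 1 - ∑ r, j r : ℕ) : ℝ) ≠ 0 := Nat.cast_ne_zero.2 (by omega)
  push_cast [Nat.factorial_succ]
  field_simp

-- Summed against `F`, the two terms of the `x_i`-derivative of the weights of degree `m + 1`
-- (see `hasDerivAt_bernsteinWeight_succ`) are Bernstein sums of degree `m`.
lemma sum_coord_mul_lowered_eq (m : ℕ) (i : Fin d) (F : (Fin d → ℕ) → ℝ) (x : Fin d → ℝ) :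
    ∑ j ∈ simplexIndices d (m + 1), (j i : ℝ) * F j * (multinomialCoeff (m + 1) j *
        (∏ r, x r ^ (j - Pi.single i 1 : Fin d → ℕ) r) * (1 - ∑ r, x r) ^ (m + 1 - ∑ r, j r)) =
      (m + 1) * bernsteinSum m (fun a => F (a + Pi.single i 1)) x := by
  rw [← sum_filter_of_ne (p := fun j => j i ≠ 0) fun j _ hne h0 => hne (by simp [h0]),
    bernsteinSum, mul_sum]
  symm
  refine sum_nbij' (· + Pi.single i 1) (· - Pi.single i 1) (fun a ha => ?_) (fun j hj => ?_)
    (fun a _ => add_tsub_cancel_right a _)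
    (fun j hj => sub_single_one_add_single_one (mem_filter.1 hj).2) (fun a ha => ?_)
  · rw [mem_filter, mem_simplexIndices, sum_add_single_one]
    exact ⟨by simpa using mem_simplexIndices.1 ha, by simp⟩
  · obtain ⟨hj, hji⟩ := mem_filter.1 hj
    have hsum := sum_add_single_one (j - Pi.single i 1) i
    rw [sub_single_one_add_single_one hji] at hsum
    rw [mem_simplexIndices] at hj ⊢
    omega
  · have hslack : m + 1 - ∑ r, (a + Pi.single i 1 : Fin d → ℕ) r = m - ∑ r, a r := by
      rw [sum_add_single_one]; omega
    rw [add_tsub_cancel_right, hslack, bernsteinWeight]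
    push_cast [Pi.add_apply, Pi.single_eq_same]
    linear_combination
      (-F (a + Pi.single i 1) * (∏ r, x r ^ a r) * (1 - ∑ r, x r) ^ (m - ∑ r, a r)) *
        add_single_one_mul_multinomialCoeff_succ m a i

lemma sum_slack_mul_lowered_eq (m : ℕ) (F : (Fin d → ℕ) → ℝ) (x : Fin d → ℝ) :
    ∑ j ∈ simplexIndices d (m + 1), ((m + 1 - ∑ r, j r : ℕ) : ℝ) * F j *
        (multinomialCoeff (m + 1) j * (∏ r, x r ^ j r) * (1 - ∑ r, x r) ^ (m - ∑ r, j r)) =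
      (m + 1) * bernsteinSum m F x := by
  have hsub : simplexIndices d m ⊆ simplexIndices d (m + 1) := fun j hj =>
    mem_simplexIndices.2 ((mem_simplexIndices.1 hj).trans m.le_succ)
  rw [bernsteinSum, mul_sum, ← sum_subset hsub fun j hj hj' => ?_]
  · refine sum_congr rfl fun j hj => ?_
    rw [bernsteinWeight]
    linear_combination (F j * (∏ r, x r ^ j r) * (1 - ∑ r, x r) ^ (m - ∑ r, j r)) *
      slack_mul_multinomialCoeff_succ (mem_simplexIndices.1 hj)
  · rw [mem_simplexIndices] at hj hj'
    simp [show m + 1 - ∑ r, j r = 0 by omega]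

lemma sum_coord_mul_bernsteinWeight_succ (m : ℕ) (i : Fin d) (F : (Fin d → ℕ) → ℝ)
    (x : Fin d → ℝ) :
    ∑ j ∈ simplexIndices d (m + 1), (j i : ℝ) * F j * bernsteinWeight (m + 1) j x =
      (m + 1) * x i * bernsteinSum m (fun a => F (a + Pi.single i 1)) x := by
  rw [mul_right_comm, ← sum_coord_mul_lowered_eq, sum_mul]
  refine sum_congr rfl fun j _ => ?_
  rcases eq_or_ne (j i) 0 with h | h
  · simp [h]
  · rw [bernsteinWeight, ← mul_prod_pow_sub_single_one x h]
    ring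

lemma sum_slack_mul_bernsteinWeight_succ (m : ℕ) (F : (Fin d → ℕ) → ℝ) (x : Fin d → ℝ) :
    ∑ j ∈ simplexIndices d (m + 1), ((m + 1 - ∑ r, j r : ℕ) : ℝ) * F j *
        bernsteinWeight (m + 1) j x =
      (m + 1) * (1 - ∑ r, x r) * bernsteinSum m F x := by
  rw [mul_right_comm, ← sum_slack_mul_lowered_eq, sum_mul]
  refine sum_congr rfl fun j hj => ?_
  rcases eq_or_lt_of_le (mem_simplexIndices.1 hj) with h | h
  · simp [h]
  · rw [bernsteinWeight, show m + 1 - ∑ r, j r = m - ∑ r, j r + 1 by omega, pow_succ]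
    ring

lemma simplexIndices_zero : simplexIndices d 0 = {0} := by
  ext j
  simp [mem_simplexIndices, funext_iff]

lemma bernsteinSum_congr {m : ℕ} {F G : (Fin d → ℕ) → ℝ} (x : Fin d → ℝ)
    (h : ∀ j ∈ simplexIndices d m, F j = G j) : bernsteinSum m F x = bernsteinSum m G x :=
  sum_congr rfl fun j hj => by rw [h j hj]

lemma bernsteinSum_add (m : ℕ) (F G : (Fin d → ℕ) → ℝ) (x : Fin d → ℝ) :
    bernsteinSum m (fun j => F j + G j) x = bernsteinSum m F x + bernsteinSum m G x := by
  simp only [bernsteinSum, add_mul, sum_add_distrib]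

lemma bernsteinSum_sub (m : ℕ) (F G : (Fin d → ℕ) → ℝ) (x : Fin d → ℝ) :
    bernsteinSum m (fun j => F j - G j) x = bernsteinSum m F x - bernsteinSum m G x := by
  simp only [bernsteinSum, sub_mul, sum_sub_distrib]

lemma bernsteinSum_const_mul (m : ℕ) (c : ℝ) (F : (Fin d → ℕ) → ℝ) (x : Fin d → ℝ) :
    bernsteinSum m (fun j => c * F j) x = c * bernsteinSum m F x := by
  simp only [bernsteinSum, mul_sum, mul_assoc]

lemma bernsteinSum_one (m : ℕ) (x : Fin d → ℝ) : bernsteinSum m (fun _ => 1) x = 1 := by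
  induction m with
  | zero => simp [bernsteinSum, simplexIndices_zero, bernsteinWeight, multinomialCoeff]
  | succ m ih =>
    have hsplit : ∀ j ∈ simplexIndices d (m + 1),
        ((m : ℝ) + 1) * (1 * bernsteinWeight (m + 1) j x) = ∑ i, (j i : ℝ) * 1 * bernsteinWeight (m + 1) j x +
          ((m + 1 - ∑ r, j r : ℕ) : ℝ) * 1 * bernsteinWeight (m + 1) j x := fun j hj => by
      rw [← sum_mul, ← sum_mul, Nat.cast_sub (mem_simplexIndices.1 hj)]
      push_cast
      ring
    have key : ((m : ℝ) + 1) * bernsteinSum (m + 1) (fun _ => 1) x = (m + 1) * 1 := by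
      rw [bernsteinSum, mul_sum, sum_congr rfl hsplit, sum_add_distrib, sum_comm,
        sum_slack_mul_bernsteinWeight_succ]
      simp_rw [sum_coord_mul_bernsteinWeight_succ, ← sum_mul, ← mul_sum, ih]
      ring
    exact mul_left_cancel₀ (by positivity) key

lemma bernsteinSum_const (m : ℕ) (c : ℝ) (x : Fin d → ℝ) : bernsteinSum m (fun _ => c) x = c := by
  rw [← mul_one c, bernsteinSum_const_mul m c (fun _ => 1) x, bernsteinSum_one]

lemma bernsteinSum_coord (m : ℕ) (i : Fin d) (x : Fin d → ℝ) :
    bernsteinSum m (fun j => (j i : ℝ)) x = m * x i := by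
  cases m with
  | zero => simp [bernsteinSum, simplexIndices_zero]
  | succ m =>
    have h := sum_coord_mul_bernsteinWeight_succ m i (fun _ => 1) x
    simp only [mul_one, bernsteinSum_one] at h
    rw [bernsteinSum, h]
    push_cast
    ring

lemma bernsteinSum_coord_mul_coord_sub_one (m : ℕ) (i : Fin d) (x : Fin d → ℝ) :
    bernsteinSum m (fun j => (j i : ℝ) * (j i - 1)) x = m * (m - 1) * x i ^ 2 := by
  cases m with
  | zero => simp [bernsteinSum, simplexIndices_zero]
  | succ m =>
    rw [bernsteinSum, sum_coord_mul_bernsteinWeight_succ,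
      bernsteinSum_congr x fun a _ =>
        show ((a + Pi.single i 1 : Fin d → ℕ) i : ℝ) - 1 = a i by simp,
      bernsteinSum_coord]
    push_cast
    ring

lemma bernsteinSum_sq_sub (m : ℕ) (hm : m ≠ 0) (i : Fin d) (x : Fin d → ℝ) :
    bernsteinSum m (fun j => ((j i : ℝ) / m - x i) ^ 2) x = (x i - x i ^ 2) / m := by
  have hm' : (m : ℝ) ≠ 0 := Nat.cast_ne_zero.2 hm
  have hexpand : ∀ j : Fin d → ℕ, ((j i : ℝ) / m - x i) ^ 2 =
      (1 / m ^ 2) * ((j i : ℝ) * (j i - 1)) + ((1 / m ^ 2 - 2 * x i / m) * (j i : ℝ) + x i ^ 2) :=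
    fun j => by field_simp; ring
  simp_rw [hexpand, bernsteinSum_add, bernsteinSum_const_mul, bernsteinSum_const,
    bernsteinSum_coord, bernsteinSum_coord_mul_coord_sub_one]
  field_simp
  ring

lemma bernsteinSum_sum_sq_sub_le (m : ℕ) (hm : m ≠ 0) (x : Fin d → ℝ) :
    bernsteinSum m (fun j => ∑ i, ((j i : ℝ) / m - x i) ^ 2) x ≤ d / m := by
  have hswap : bernsteinSum m (fun j => ∑ i, ((j i : ℝ) / m - x i) ^ 2) x =
      ∑ i, bernsteinSum m (fun j => ((j i : ℝ) / m - x i) ^ 2) x := by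
    simp only [bernsteinSum, sum_mul]
    exact sum_comm
  rw [hswap]
  calc ∑ i, bernsteinSum m (fun j => ((j i : ℝ) / m - x i) ^ 2) x
      ≤ ∑ _i : Fin d, 1 / (m : ℝ) := sum_le_sum fun i _ => by
        rw [bernsteinSum_sq_sub m hm]
        gcongr
        nlinarith [sq_nonneg (x i - 1)]
    _ = d / m := by simp [div_eq_mul_inv]

lemma bernsteinSum_mono {m : ℕ} {x : Fin d → ℝ} (hx : x ∈ stdSimplex' d) {F G : (Fin d → ℕ) → ℝ}
    (h : ∀ j ∈ simplexIndices d m, F j ≤ G j) : bernsteinSum m F x ≤ bernsteinSum m G x :=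
  sum_le_sum fun j hj => mul_le_mul_of_nonneg_right (h j hj) (bernsteinWeight_nonneg hx)

lemma abs_bernsteinSum_le {m : ℕ} {x : Fin d → ℝ} (hx : x ∈ stdSimplex' d) (F : (Fin d → ℕ) → ℝ) :
    |bernsteinSum m F x| ≤ bernsteinSum m (fun j => |F j|) x :=
  (abs_sum_le_sum_abs _ _).trans_eq <| sum_congr rfl fun j _ => by
    rw [abs_mul, abs_of_nonneg (bernsteinWeight_nonneg hx)]

lemma abs_bernsteinSum_le_of_abs_le {m : ℕ} {x : Fin d → ℝ} (hx : x ∈ stdSimplex' d)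
    {F : (Fin d → ℕ) → ℝ} {M : ℝ} (h : ∀ j ∈ simplexIndices d m, |F j| ≤ M) : |bernsteinSum m F x| ≤ M :=
  (abs_bernsteinSum_le hx F).trans <| (bernsteinSum_mono hx h).trans_eq (bernsteinSum_const m M x)

lemma abs_bernsteinSum_sub_le {m : ℕ} {x : Fin d → ℝ} (hx : x ∈ stdSimplex' d) (hm : m ≠ 0)
    {F : (Fin d → ℕ) → ℝ} {G ε C : ℝ} (hC : 0 ≤ C)
    (h : ∀ j ∈ simplexIndices d m, |F j - G| ≤ ε + C * ∑ i, ((j i : ℝ) / m - x i) ^ 2) :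
    |bernsteinSum m F x - G| ≤ ε + C * (d / m) := by
  calc |bernsteinSum m F x - G| = |bernsteinSum m (fun j => F j - G) x| := by
        rw [bernsteinSum_sub, bernsteinSum_const]
    _ ≤ bernsteinSum m (fun j => ε + C * ∑ i, ((j i : ℝ) / m - x i) ^ 2) x :=
        (abs_bernsteinSum_le hx _).trans (bernsteinSum_mono hx h)
    _ ≤ ε + C * (d / m) := by
        rw [bernsteinSum_add, bernsteinSum_const, bernsteinSum_const_mul]
        gcongr
        exact bernsteinSum_sum_sq_sub_le m hm x

/-! ### Partial derivatives of Bernstein sums -/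

lemma hasDerivAt_bernsteinWeight_succ (m : ℕ) (j : Fin d → ℕ) (i : Fin d) (x : Fin d → ℝ) :
    HasDerivAt (fun t => bernsteinWeight (m + 1) j (Function.update x i t))
      (multinomialCoeff (m + 1) j *
        ((j i : ℝ) * (∏ r, x r ^ (j - Pi.single i 1 : Fin d → ℕ) r) *
            (1 - ∑ r, x r) ^ (m + 1 - ∑ r, j r) -
          ((m + 1 - ∑ r, j r : ℕ) : ℝ) * (∏ r, x r ^ j r) * (1 - ∑ r, x r) ^ (m - ∑ r, j r)))
      (x i) := by
  have hupdate : ∀ t, bernsteinWeight (m + 1) j (Function.update x i t) =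
      multinomialCoeff (m + 1) j * ((t ^ j i * ∏ r ∈ univ.erase i, x r ^ j r) *
        (1 - (t + ∑ r ∈ univ.erase i, x r)) ^ (m + 1 - ∑ r, j r)) := fun t => by
    rw [bernsteinWeight, ← mul_prod_erase univ _ (mem_univ i), ← add_sum_erase univ _ (mem_univ i),
      prod_congr rfl fun r hr => by rw [Function.update_of_ne (mem_erase.1 hr).1],
      sum_congr rfl fun r hr => by rw [Function.update_of_ne (mem_erase.1 hr).1]]
    simp only [Function.update_self, mul_assoc]
  have hbase : HasDerivAt (fun t : ℝ => 1 - (t + ∑ r ∈ univ.erase i, x r)) (-1) (x i) :=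
    ((hasDerivAt_id (x i)).add_const _).const_sub 1
  rw [funext hupdate]
  refine ((((hasDerivAt_pow (j i) (x i)).mul_const (∏ r ∈ univ.erase i, x r ^ j r)).fun_mul
    (hbase.fun_pow (m + 1 - ∑ r, j r))).const_mul (multinomialCoeff (m + 1) j)).congr_deriv ?_
  rw [← add_sum_erase univ x (mem_univ i), ← mul_prod_erase univ (fun r => x r ^ j r) (mem_univ i),
    prod_pow_sub_single_one, show m - ∑ r, j r = m + 1 - ∑ r, j r - 1 by omega]
  ring

lemma hasDerivAt_bernsteinSum_succ (m : ℕ) (F : (Fin d → ℕ) → ℝ) (i : Fin d) (x : Fin d → ℝ) :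
    HasDerivAt (fun t => bernsteinSum (m + 1) F (Function.update x i t))
      ((m + 1) * bernsteinSum m (fun a => F (a + Pi.single i 1) - F a) x) (x i) := by
  refine (HasDerivAt.fun_sum fun j _ =>
    (hasDerivAt_bernsteinWeight_succ m j i x).const_mul (F j)).congr_deriv ?_
  rw [bernsteinSum_sub, mul_sub, ← sum_coord_mul_lowered_eq, ← sum_slack_mul_lowered_eq,
    ← sum_sub_distrib]
  exact sum_congr rfl fun j _ => by ring

noncomputable def iteratedPartial (l : List (Fin d)) (g : (Fin d → ℝ) → ℝ) : (Fin d → ℝ) → ℝ :=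
  l.foldr partialDeriv' g

lemma iteratedPartial_append (l₁ l₂ : List (Fin d)) (g : (Fin d → ℝ) → ℝ) :
    iteratedPartial (l₁ ++ l₂) g = iteratedPartial l₁ (iteratedPartial l₂ g) :=
  List.foldr_append

lemma iteratedPartial_replicate (n : ℕ) (i : Fin d) (g : (Fin d → ℝ) → ℝ) :
    iteratedPartial (List.replicate n i) g = (partialDeriv' i)^[n] g := by
  induction n with
  | zero => rfl
  | succ n ih =>
    rw [Function.iterate_succ_apply', ← ih]
    rfl

lemma mixedPartial_eq_iteratedPartial (k : Fin d → ℕ) (g : (Fin d → ℝ) → ℝ) :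
    mixedPartial k g = iteratedPartial (multiIndexList k) g := by
  unfold mixedPartial multiIndexList
  induction List.finRange d with
  | nil => rfl
  | cons a L ih =>
    rw [List.foldr_cons, List.flatMap_cons, iteratedPartial_append, iteratedPartial_replicate, ih]

/-! ### Finite differences and the mean value theorem -/

lemma fwdDiff_comm {M G : Type*} [AddCommMonoid M] [AddCommGroup G] (h h' : M) (f : M → G) :
    Δ_[h] (Δ_[h'] f) = Δ_[h'] (Δ_[h] f) := by
  funext x
  simp only [fwdDiff, add_right_comm x h h']
  abel

noncomputable def coordFwdDiff (δ : ℝ) (l : List (Fin d)) (f : (Fin d → ℝ) → ℝ) :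
    (Fin d → ℝ) → ℝ :=
  l.foldr (fun i => Δ_[Pi.single i δ]) f

lemma fwdDiff_coordFwdDiff (δ : ℝ) (l : List (Fin d)) (h : Fin d → ℝ) (f : (Fin d → ℝ) → ℝ) :
    Δ_[h] (coordFwdDiff δ l f) = coordFwdDiff δ l (Δ_[h] f) := by
  induction l with
  | nil => rfl
  | cons a l ih =>
    change Δ_[h] (Δ_[Pi.single a δ] (coordFwdDiff δ l f)) = Δ_[Pi.single a δ] (coordFwdDiff δ l _)
    rw [fwdDiff_comm, ih]

lemma update_add_single (x : Fin d → ℝ) (a i : Fin d) (t δ : ℝ) :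
    Function.update x a t + Pi.single i δ =
      Function.update (x + Pi.single i δ) a (t + (Pi.single i δ : Fin d → ℝ) a) := by
  funext r
  rcases eq_or_ne r a with rfl | hr
  · simp
  · simp [Function.update_of_ne hr]

lemma IsPartialAlong.fwdDiff_single {l : List (Fin d)} {f g : (Fin d → ℝ) → ℝ}
    (hfg : IsPartialAlong l f g) (i : Fin d) (δ : ℝ) :
    IsPartialAlong l (Δ_[Pi.single i δ] f) (Δ_[Pi.single i δ] g) := by
  induction l generalizing g with
  | nil => exact congrArg _ hfg
  | cons a l ih =>
    obtain ⟨p, hp, hderiv⟩ := hfg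
    refine ⟨Δ_[Pi.single i δ] p, ih hp, fun x => ?_⟩
    have hshift := HasDerivAt.comp_add_const (x a) ((Pi.single i δ : Fin d → ℝ) a)
      (hderiv (x + Pi.single i δ))
    simp only [fwdDiff, update_add_single]
    exact hshift.sub (hderiv x)

lemma exists_fwdDiff_single_eq_mul {a : Fin d} {p g : (Fin d → ℝ) → ℝ}
    (hp : ∀ y, HasDerivAt (fun t => p (Function.update y a t)) (g y) (y a)) {δ : ℝ} (hδ : 0 < δ)
    (x : Fin d → ℝ) :
    ∃ c ∈ Set.Ioo (x a) (x a + δ), Δ_[Pi.single a δ] p x = δ * g (Function.update x a c) := by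
  have hline : ∀ t, HasDerivAt (fun s => p (Function.update x a s)) (g (Function.update x a t)) t :=
    fun t => by simpa using hp (Function.update x a t)
  obtain ⟨c, hc, hslope⟩ := exists_hasDerivAt_eq_slope _ _ (lt_add_of_pos_right (x a) hδ)
    (fun t _ => (hline t).continuousAt.continuousWithinAt) fun t _ => hline t
  refine ⟨c, hc, ?_⟩
  rw [add_sub_cancel_left, Function.update_eq_self, eq_div_iff hδ.ne'] at hslope
  have hpoint : x + Pi.single a δ = Function.update x a (x a + δ) := by
    funext r
    rcases eq_or_ne r a with rfl | hr
    · simp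
    · simp [hr]
  rw [fwdDiff, hpoint, ← hslope, mul_comm]

lemma IsPartialAlong.exists_coordFwdDiff_eq {l : List (Fin d)} {f g : (Fin d → ℝ) → ℝ}
    (hfg : IsPartialAlong l f g) {δ : ℝ} (hδ : 0 < δ) (x : Fin d → ℝ) :
    ∃ ξ : Fin d → ℝ, (∀ r, ξ r ∈ Set.Icc (x r) (x r + l.length * δ)) ∧
      coordFwdDiff δ l f x = δ ^ l.length * g ξ := by
  induction l generalizing f g with
  | nil => exact ⟨x, fun r => by simp, by rw [hfg]; simp [coordFwdDiff]⟩
  | cons a l ih =>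
    obtain ⟨p, hp, hderiv⟩ := hfg
    obtain ⟨ξ, hξ, hdiff⟩ := ih (hp.fwdDiff_single a δ)
    obtain ⟨c, hc, hmvt⟩ := exists_fwdDiff_single_eq_mul hderiv hδ ξ
    refine ⟨Function.update ξ a c, fun r => ?_, ?_⟩
    · obtain ⟨hlo, hhi⟩ := hξ r
      rcases eq_or_ne r a with rfl | hr
      · simp only [Function.update_self, List.length_cons, Nat.cast_succ]
        constructor <;> linarith [hc.1, hc.2]
      · simp only [Function.update_of_ne hr, List.length_cons, Nat.cast_succ]
        constructor <;> nlinarith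
    · change Δ_[Pi.single a δ] (coordFwdDiff δ l f) x = _
      rw [fwdDiff_coordFwdDiff, hdiff, hmvt, List.length_cons, pow_succ]
      ring

/-! ### Mixed partials of simplex Bernstein polynomials -/

lemma gridPoint_add_single (n : ℕ) (j : Fin d → ℕ) (i : Fin d) :
    gridPoint n (j + Pi.single i 1) = gridPoint n j + Pi.single i (1 / n : ℝ) := by
  funext r
  rcases eq_or_ne r i with rfl | hr
  · simp [gridPoint, add_div]
  · simp [gridPoint, hr]

lemma iteratedPartial_bernsteinSum (l : List (Fin d)) (n : ℕ) (φ : (Fin d → ℝ) → ℝ) (m : ℕ) :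
    iteratedPartial l (bernsteinSum (m + l.length) fun j => φ (gridPoint n j)) =
      fun x => ((m + l.length).descFactorial l.length : ℝ) *
        bernsteinSum m (fun j => coordFwdDiff (1 / n) l φ (gridPoint n j)) x := by
  induction l generalizing m with
  | nil => funext x; simp [iteratedPartial, coordFwdDiff]
  | cons a l ih =>
    have hlen : m + (a :: l).length = m + 1 + l.length := by simp [add_assoc, add_comm 1]
    have hdesc : ((m + 1 + l.length).descFactorial (l.length + 1) : ℝ) =
        (m + 1 + l.length).descFactorial l.length * (m + 1) := by
      rw [Nat.descFactorial_succ, show m + 1 + l.length - l.length = m + 1 by omega]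
      push_cast
      ring
    funext x
    change partialDeriv' a (iteratedPartial l _) x = _
    rw [hlen, ih, partialDeriv', ((hasDerivAt_bernsteinSum_succ m _ a x).const_mul _).deriv,
      List.length_cons, hdesc, mul_assoc]
    simp only [gridPoint_add_single]
    rfl

lemma exists_iteratedPartial_simplexBernstein_eq {l : List (Fin d)} {f g : (Fin d → ℝ) → ℝ}
    (hfg : IsPartialAlong l f g) (m : ℕ) (hn : m + l.length ≠ 0) :
    ∃ ξ : (Fin d → ℕ) → Fin d → ℝ,
      (∀ j r, ξ j r ∈
        Set.Icc ((j r : ℝ) / (m + l.length : ℕ)) ((j r + l.length) / (m + l.length : ℕ))) ∧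
      iteratedPartial l (simplexBernstein d (m + l.length) f) = fun x =>
        ((m + l.length).descFactorial l.length / ((m + l.length : ℕ) : ℝ) ^ l.length) *
          bernsteinSum m (fun j => g (ξ j)) x := by
  have hn' : (0 : ℝ) < (m + l.length : ℕ) := Nat.cast_pos.2 (Nat.pos_of_ne_zero hn)
  choose ξ hξ hdiff using fun j =>
    hfg.exists_coordFwdDiff_eq (one_div_pos.2 hn') (gridPoint (m + l.length) j)
  refine ⟨ξ, fun j r => ?_, ?_⟩
  · simpa [gridPoint, add_div, div_eq_mul_one_div (l.length : ℝ)] using hξ j r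
  · rw [simplexBernstein_eq_bernsteinSum, iteratedPartial_bernsteinSum]
    funext x
    simp_rw [hdiff, bernsteinSum_const_mul, one_div_pow]
    field_simp

/-! ### Uniform estimates -/

lemma abs_sub_div_le_of_mem_Icc {a m K y : ℝ} (ha : 0 ≤ a) (ham : a ≤ m) (hm : 0 < m) (hK : 0 ≤ K)
    (hy : y ∈ Set.Icc (a / (m + K)) ((a + K) / (m + K))) : |y - a / m| ≤ K / (m + K) := by
  have hmK : 0 < m + K := by linarith
  have hlo : a / m - a / (m + K) ≤ K / (m + K) := by
    rw [div_sub_div _ _ hm.ne' hmK.ne', div_le_div_iff₀ (by positivity) hmK]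
    nlinarith [mul_le_mul_of_nonneg_right ham (mul_nonneg hK hmK.le)]
  have hmono : a / (m + K) ≤ a / m := div_le_div_of_nonneg_left ha hm (by linarith)
  rw [add_div] at hy
  rw [abs_le]
  constructor <;> linarith [hy.1, hy.2]

lemma mem_Icc_zero_one_of_mem_Icc {a m K y : ℝ} (ha : 0 ≤ a) (ham : a ≤ m) (hmK : 0 < m + K)
    (hy : y ∈ Set.Icc (a / (m + K)) ((a + K) / (m + K))) : y ∈ Set.Icc 0 1 :=
  ⟨(div_nonneg ha hmK.le).trans hy.1, hy.2.trans ((div_le_one hmK).2 (by linarith))⟩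

lemma sum_sq_sub_le_of_abs_sub_le {ι : Type*} [Fintype ι] {x y z : ι → ℝ} {η : ℝ}
    (h : ∀ i, |y i - z i| ≤ η) :
    ∑ i, (y i - x i) ^ 2 ≤ 2 * (Fintype.card ι * η ^ 2) + 2 * ∑ i, (z i - x i) ^ 2 := by
  calc ∑ i, (y i - x i) ^ 2 ≤ ∑ i, (2 * η ^ 2 + 2 * (z i - x i) ^ 2) := sum_le_sum fun i _ => by
        have := sq_le_sq' (neg_le_of_abs_le (h i)) (le_of_abs_le (h i))
        nlinarith [sq_nonneg (y i - 2 * z i + x i)]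
    _ = 2 * (Fintype.card ι * η ^ 2) + 2 * ∑ i, (z i - x i) ^ 2 := by
        simp [sum_add_distrib, mul_sum]
        ring

lemma exists_abs_sub_le_add_mul_sum_sq {ι : Type*} [Fintype ι] {Q : Set (ι → ℝ)} (hQ : IsCompact Q)
    {g : (ι → ℝ) → ℝ} (hg : ContinuousOn g Q) {ε : ℝ} (hε : 0 < ε) :
    ∃ C, 0 ≤ C ∧ ∀ y ∈ Q, ∀ x ∈ Q, |g y - g x| ≤ ε + C * ∑ i, (y i - x i) ^ 2 := by
  obtain ⟨M, hM⟩ := hQ.exists_bound_of_continuousOn hg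
  obtain ⟨δ, hδ, hclose⟩ :=
    Metric.uniformContinuousOn_iff_le.1 (hQ.uniformContinuousOn_of_continuous hg) ε hε
  refine ⟨2 * max M 0 / δ ^ 2, by positivity, fun y hy x hx => ?_⟩
  by_cases hxy : dist y x ≤ δ
  · have := hclose y hy x hx hxy
    rw [Real.dist_eq] at this
    have : 0 ≤ 2 * max M 0 / δ ^ 2 * ∑ i, (y i - x i) ^ 2 := by positivity
    linarith
  · obtain ⟨i, hi⟩ : ∃ i, δ < |y i - x i| := by
      by_contra! h
      exact hxy ((dist_pi_le_iff hδ.le).2 fun i => (Real.dist_eq _ _).trans_le (h i))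
    have hsq : δ ^ 2 ≤ ∑ i, (y i - x i) ^ 2 := by
      simp_rw [← sq_abs (y _ - x _)]
      exact (pow_le_pow_left₀ hδ.le hi.le 2).trans
        (single_le_sum (f := fun i => |y i - x i| ^ 2) (fun i _ => sq_nonneg _) (mem_univ i))
    have hgy := (Real.norm_eq_abs _ ▸ hM y hy).trans (le_max_left M 0)
    have hgx := (Real.norm_eq_abs _ ▸ hM x hx).trans (le_max_left M 0)
    calc |g y - g x| ≤ 2 * max M 0 := by linarith [abs_sub (g y) (g x)]
      _ = 2 * max M 0 / δ ^ 2 * δ ^ 2 := by field_simp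
      _ ≤ ε + 2 * max M 0 / δ ^ 2 * ∑ i, (y i - x i) ^ 2 := by
        nlinarith [mul_le_mul_of_nonneg_left hsq (by positivity : 0 ≤ 2 * max M 0 / δ ^ 2)]

lemma tendsto_descFactorial_div_pow (K : ℕ) :
    Tendsto (fun n : ℕ => (n.descFactorial K : ℝ) / (n : ℝ) ^ K) atTop (𝓝 1) := by
  have hprod : ∀ᶠ n : ℕ in atTop,
      ∏ r ∈ range K, (1 - (r : ℝ) / n) = (n.descFactorial K : ℝ) / (n : ℝ) ^ K := by
    filter_upwards [eventually_ge_atTop (max K 1)] with n hn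
    have hn0 : (n : ℝ) ≠ 0 := Nat.cast_ne_zero.2 (by omega)
    rw [Nat.descFactorial_eq_prod_range, Nat.cast_prod,
      show (n : ℝ) ^ K = ∏ _r ∈ range K, (n : ℝ) by rw [prod_const, card_range],
      ← prod_div_distrib]
    refine prod_congr rfl fun r hr => ?_
    rw [Nat.cast_sub (by have := mem_range.1 hr; omega)]
    field_simp
  refine Tendsto.congr' hprod ?_
  simpa using tendsto_finsetProd (range K) fun r _ =>
    (tendsto_const_nhds (x := (1 : ℝ))).sub (tendsto_const_div_atTop_nhds_zero_nat (r : ℝ))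

lemma stdSimplex'_subset_Icc : stdSimplex' d ⊆ Set.Icc 0 1 := fun _ hx =>
  ⟨hx.1, fun i => (single_le_sum (fun r _ => hx.1 r) (mem_univ i)).trans hx.2⟩

lemma dist_iteratedPartial_simplexBernstein_le {l : List (Fin d)} {f g : (Fin d → ℝ) → ℝ}
    (hfg : IsPartialAlong l f g) {ε C M : ℝ} (hC : 0 ≤ C)
    (hM : ∀ y ∈ Set.Icc (0 : Fin d → ℝ) 1, |g y| ≤ M)
    (hgC : ∀ y ∈ Set.Icc (0 : Fin d → ℝ) 1, ∀ x ∈ Set.Icc (0 : Fin d → ℝ) 1,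
      |g y - g x| ≤ ε + C * ∑ i, (y i - x i) ^ 2)
    {m : ℕ} (hm : m ≠ 0) {x : Fin d → ℝ} (hx : x ∈ stdSimplex' d) :
    dist (g x) (iteratedPartial l (simplexBernstein d (m + l.length) f) x) ≤
      ε + (|(m + l.length).descFactorial l.length / ((m : ℝ) + l.length) ^ l.length - 1| * M +
        2 * C * (d * (l.length / ((m : ℝ) + l.length)) ^ 2 + d / m)) := by
  obtain ⟨ξ, hξ, hrep⟩ := exists_iteratedPartial_simplexBernstein_eq hfg m (by omega)
  push_cast at hξ hrep
  have hm' : (0 : ℝ) < m := Nat.cast_pos.2 (Nat.pos_of_ne_zero hm)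
  have hK : (0 : ℝ) ≤ l.length := Nat.cast_nonneg _
  have hjm : ∀ j ∈ simplexIndices d m, ∀ r, (j r : ℝ) ≤ m := fun j hj r =>
    Nat.cast_le.2 (le_of_mem_simplexIndices hj r)
  have hξQ : ∀ j ∈ simplexIndices d m, ξ j ∈ Set.Icc 0 1 := fun j hj =>
    have hcoord := fun r =>
      mem_Icc_zero_one_of_mem_Icc (Nat.cast_nonneg _) (hjm j hj r) (by positivity) (hξ j r)
    ⟨fun r => (hcoord r).1, fun r => (hcoord r).2⟩
  set B := bernsteinSum m (fun j => g (ξ j)) x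
  have hB : |B| ≤ M := abs_bernsteinSum_le_of_abs_le hx fun j hj => hM _ (hξQ j hj)
  have hBg : |B - g x| ≤
      (ε + 2 * C * (d * (l.length / ((m : ℝ) + l.length)) ^ 2)) + 2 * C * (d / m) :=
    abs_bernsteinSum_sub_le hx hm (by positivity) fun j hj => by
      have hsq := sum_sq_sub_le_of_abs_sub_le (x := x) (z := fun i => (j i : ℝ) / m) fun r =>
        abs_sub_div_le_of_mem_Icc (Nat.cast_nonneg _) (hjm j hj r) hm' hK (hξ j r)
      rw [Fintype.card_fin] at hsq
      have := hgC _ (hξQ j hj) x (stdSimplex'_subset_Icc hx)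
      nlinarith [mul_le_mul_of_nonneg_left hsq hC]
  rw [hrep, Real.dist_eq]
  set c := ((m + l.length).descFactorial l.length : ℝ) / ((m : ℝ) + l.length) ^ l.length
  calc |g x - c * B| = |(g x - B) - (c - 1) * B| := by ring_nf
    _ ≤ |B - g x| + |c - 1| * |B| := by rw [← abs_mul, abs_sub_comm B]; exact abs_sub _ _
    _ ≤ _ := by nlinarith [mul_le_mul_of_nonneg_left hB (abs_nonneg (c - 1))]

end

theorem simplexBernstein_mixedPartial_tendstoUniformlyOn_general (d : ℕ)
    (k : Fin d → ℕ) (f g : (Fin d → ℝ) → ℝ)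
    (hg : IsPartialAlong (multiIndexList k) f g) (hgc : Continuous g) :
    TendstoUniformlyOn (fun n x => mixedPartial k (simplexBernstein d n f) x) g
      Filter.atTop (stdSimplex' d) := by
  set K := (multiIndexList k).length
  have hQ : IsCompact (Set.Icc (0 : Fin d → ℝ) 1) := isCompact_Icc
  obtain ⟨M, hM⟩ := hQ.exists_bound_of_continuousOn hgc.continuousOn
  rw [Metric.tendstoUniformlyOn_iff]
  intro ε hε
  obtain ⟨C, hC, hgC⟩ := exists_abs_sub_le_add_mul_sum_sq hQ hgc.continuousOn (half_pos hε)
  have herr : Tendsto (fun m : ℕ => |(m + K).descFactorial K / ((m : ℝ) + K) ^ K - 1| * M +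
      2 * C * (d * (K / ((m : ℝ) + K)) ^ 2 + d / m)) atTop (𝓝 0) := by
    have hcoeff := (tendsto_descFactorial_div_pow K).comp (tendsto_add_atTop_nat K)
    have hstep := (tendsto_const_div_atTop_nhds_zero_nat (K : ℝ)).comp (tendsto_add_atTop_nat K)
    have hvar := ((hstep.pow 2).const_mul (d : ℝ)).add
      (tendsto_const_div_atTop_nhds_zero_nat (d : ℝ))
    have hlim := ((hcoeff.sub_const 1).abs.mul_const M).add (hvar.const_mul (2 * C))
    simpa [Function.comp_def] using hlim
  rw [← map_add_atTop_eq_nat K, eventually_map]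
  filter_upwards [herr.eventually (gt_mem_nhds (half_pos hε)), eventually_ne_atTop 0]
    with m hsmall hm x hx
  rw [mixedPartial_eq_iteratedPartial]
  refine (dist_iteratedPartial_simplexBernstein_le hg hC hM hgC hm hx).trans_lt ?_
  linarith

/-- If `d ≥ 1`, `k` is a multi-index and `f : ℝ^d → ℝ` possesses a continuous mixed
partial derivative `g = ∂^{|k|}f/∂x_1^{k_1}⋯∂x_d^{k_d}`, then the corresponding mixed
partial derivatives of the simplex Bernstein polynomials `B_n(f;·)` converge to `g`
uniformly on the simplex `S^d`. -/
theorem simplexBernstein_mixedPartial_tendstoUniformlyOn (d : ℕ) (hd : 1 ≤ d)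
    (k : Fin d → ℕ) (f g : (Fin d → ℝ) → ℝ)
    (hg : IsPartialAlong (multiIndexList k) f g) (hgc : Continuous g) :
    TendstoUniformlyOn (fun n x => mixedPartial k (simplexBernstein d n f) x) g
      Filter.atTop (stdSimplex' d) :=
  simplexBernstein_mixedPartial_tendstoUniformlyOn_general d k f g hg hgc
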